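/- arXiv:1907.02056 — 6 statements merged into one kernel-verified Lean document; each statement's English description precedes it below -/
import Mathlib

section
/- In the ℓ₁-ℓ₁ setup, the 'sampling from the difference' gradient estimator is (w₀, ‖A‖_max)-centered. Concretely: let A ∈ ℝ^{m×n}, w₀ = (x₀, y₀) and w = (x, y) in Δⁿ × Δᵐ, and sample i ∈ [m] with probability p_i = |y_i − (y₀)_i|/‖y − y₀‖₁ and independently j ∈ [n] with probability q_j = |x_j − (x₀)_j|/‖x − x₀‖₁. Set g̃(w) = (Aᵀy₀ + A_{i:}·‖y−y₀‖₁·sign(y_i − (y₀)_i), −Ax₀ − A_{:j}·‖x−x₀‖₁·sign(x_j − (x₀)_j)). Then E[g̃(w)] = (Aᵀy, −Ax), and with probability 1, ‖g̃(w) − (Aᵀy₀, −Ax₀)‖*² ≤ ‖A‖_max²(‖x − x₀‖₁² + ‖y − y₀‖₁²), where ‖(gˣ, gʸ)‖*² = ‖gˣ‖_∞² + ‖gʸ‖_∞². -/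
noncomputable def l1norm {d : ℕ} (v : Fin d → ℝ) : ℝ := ∑ i, |v i|

noncomputable def linfnorm {d : ℕ} (v : Fin d → ℝ) : ℝ := ⨆ i, |v i|

/-!
The estimator is an importance-sampling estimator of `Aᵀ(y - y₀)` (resp. `-A(x - x₀)`) added
to the reference value `Aᵀy₀` (resp. `-Ax₀`): sampling `i` with probability `|vᵢ| / ‖v‖₁` and
reweighting the `i`-th term by `‖v‖₁ sign vᵢ` turns `∑ᵢ vᵢ fᵢ` into an expectation, so the
estimator is unbiased. Its deviation from the reference value is a single row (column) of `A`
scaled by at most `‖v‖₁`, whose `ℓ_∞` norm is at most `‖v‖₁ ‖A‖_max`.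
-/

open Finset

namespace Real

lemma sign_mul_abs (r : ℝ) : sign r * |r| = r := by
  rcases lt_trichotomy r 0 with h | rfl | h
  · rw [sign_of_neg h, abs_of_neg h]; ring
  · simp
  · rw [sign_of_pos h, abs_of_pos h, one_mul]

lemma abs_sign_le_one (r : ℝ) : |sign r| ≤ 1 := by
  rcases sign_apply_eq r with h | h | h <;> simp [h]

end Real

section l1norm

variable {d : ℕ}

lemma l1norm_nonneg (v : Fin d → ℝ) : 0 ≤ l1norm v :=
  sum_nonneg fun i _ => abs_nonneg (v i)

lemma l1norm_pos {v : Fin d → ℝ} (hv : v ≠ 0) : 0 < l1norm v := by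
  obtain ⟨i, hi⟩ := Function.ne_iff.mp hv
  exact sum_pos' (fun i _ => abs_nonneg (v i)) ⟨i, mem_univ i, abs_pos.mpr hi⟩

lemma sum_abs_div_l1norm {v : Fin d → ℝ} (hv : v ≠ 0) : ∑ i, |v i| / l1norm v = 1 := by
  rw [← sum_div]
  exact div_self (l1norm_pos hv).ne'

lemma abs_div_l1norm_mul_l1norm_mul_sign {v : Fin d → ℝ} (hv : v ≠ 0) (i : Fin d) :
    |v i| / l1norm v * (l1norm v * Real.sign (v i)) = v i := by
  have := (l1norm_pos hv).ne'
  field_simp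
  linear_combination Real.sign_mul_abs (v i)

lemma sum_abs_div_l1norm_smul {E : Type*} [AddCommGroup E] [Module ℝ E]
    {v : Fin d → ℝ} (hv : v ≠ 0) (c : E) (f : Fin d → E) :
    ∑ i, (|v i| / l1norm v) • (c + (l1norm v * Real.sign (v i)) • f i) =
      c + ∑ i, v i • f i := by
  simp only [smul_add, smul_smul, abs_div_l1norm_mul_l1norm_mul_sign hv, sum_add_distrib,
    ← sum_smul, sum_abs_div_l1norm hv, one_smul]

lemma abs_l1norm_mul_sign_le (v : Fin d → ℝ) (r : ℝ) :
    |l1norm v * Real.sign r| ≤ l1norm v := by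
  rw [abs_mul, abs_of_nonneg (l1norm_nonneg v)]
  exact mul_le_of_le_one_right (l1norm_nonneg v) (Real.abs_sign_le_one r)

end l1norm

section linfnorm

variable {d : ℕ}

lemma linfnorm_smul (a : ℝ) (v : Fin d → ℝ) : linfnorm (a • v) = |a| * linfnorm v := by
  simp only [linfnorm, Real.mul_iSup_of_nonneg (abs_nonneg a), Pi.smul_apply, smul_eq_mul,
    abs_mul]

lemma linfnorm_nonneg (v : Fin d → ℝ) : 0 ≤ linfnorm v :=
  Real.iSup_nonneg fun i => abs_nonneg (v i)

lemma linfnorm_neg (v : Fin d → ℝ) : linfnorm (-v) = linfnorm v := by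
  simp only [linfnorm, Pi.neg_apply, abs_neg]

lemma linfnorm_smul_le {a L M : ℝ} {w : Fin d → ℝ} (ha : |a| ≤ L) (hw : ∀ k, |w k| ≤ M)
    (hM : 0 ≤ M) : linfnorm (a • w) ≤ L * M := by
  rw [linfnorm_smul]
  exact mul_le_mul ha (Real.iSup_le hw hM) (linfnorm_nonneg w) ((abs_nonneg a).trans ha)

end linfnorm

section

variable {m n : ℕ} (A : Matrix (Fin m) (Fin n) ℝ)

lemma add_sum_sub_smul_row (y y₀ : Fin m → ℝ) :
    ((fun k => ∑ i', A i' k * y₀ i') + ∑ i, (y i - y₀ i) • A i) =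
      fun k => ∑ i', A i' k * y i' := by
  funext k
  simp only [Pi.add_apply, Finset.sum_apply, Pi.smul_apply, smul_eq_mul]
  simp only [sub_mul, sum_sub_distrib, mul_comm (y _), mul_comm (y₀ _)]
  ring

lemma add_sum_sub_smul_neg_col (x x₀ : Fin n → ℝ) :
    ((fun i => -∑ j', A i j' * x₀ j') + ∑ j, (x j - x₀ j) • -fun i => A i j) =
      fun i => -∑ j', A i j' * x j' := by
  funext i
  simp only [Pi.add_apply, Finset.sum_apply, Pi.smul_apply, Pi.neg_apply, smul_eq_mul]
  simp only [mul_neg, sub_mul, sum_neg_distrib, sum_sub_distrib, mul_comm (x _), mul_comm (x₀ _)]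
  ring

end

theorem l1_l1_estimator_centered_general {m n : ℕ}
    (A : Matrix (Fin m) (Fin n) ℝ)
    (x x₀ : Fin n → ℝ) (y y₀ : Fin m → ℝ)
    (hxne : x ≠ x₀) (hyne : y ≠ y₀)
    (p : Fin m → ℝ) (hp : ∀ i, p i = |y i - y₀ i| / l1norm (y - y₀))
    (q : Fin n → ℝ) (hq : ∀ j, q j = |x j - x₀ j| / l1norm (x - x₀))
    (Gx : Fin m → Fin n → ℝ) (Gy : Fin n → Fin m → ℝ)
    (hGx : ∀ i, Gx i =
      (fun k => ∑ i', A i' k * y₀ i') +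
        (l1norm (y - y₀) * Real.sign (y i - y₀ i)) • A i)
    (hGy : ∀ j, Gy j =
      (fun i => -∑ j', A i j' * x₀ j') -
        (l1norm (x - x₀) * Real.sign (x j - x₀ j)) • (fun i => A i j)) :
    (∑ i, p i • Gx i = fun k => ∑ i', A i' k * y i') ∧
    (∑ j, q j • Gy j = fun i => -∑ j', A i j' * x j') ∧
    (∀ i j,
      linfnorm (Gx i - fun k => ∑ i', A i' k * y₀ i') ^ 2 +
        linfnorm (Gy j - fun i' => -∑ j', A i' j' * x₀ j') ^ 2 ≤
      (⨆ ij : Fin m × Fin n, |A ij.1 ij.2|) ^ 2 *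
        (l1norm (x - x₀) ^ 2 + l1norm (y - y₀) ^ 2)) := by
  set M := ⨆ ij : Fin m × Fin n, |A ij.1 ij.2|
  have hAM (a : Fin m) (b : Fin n) : |A a b| ≤ M :=
    le_ciSup (f := fun ij : Fin m × Fin n => |A ij.1 ij.2|) (Finite.bddAbove_range _) (a, b)
  refine ⟨?_, ?_, fun i j => ?_⟩
  · have := sum_abs_div_l1norm_smul (sub_ne_zero.mpr hyne) (fun k => ∑ i', A i' k * y₀ i') A
    simp only [Pi.sub_apply] at this
    simp only [hp, hGx, this, add_sum_sub_smul_row]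
  · have := sum_abs_div_l1norm_smul (sub_ne_zero.mpr hxne) (fun i => -∑ j', A i j' * x₀ j')
      fun j => -fun i => A i j
    simp only [Pi.sub_apply] at this
    simp only [hq, hGy, sub_eq_add_neg (G := Fin m → ℝ), ← smul_neg, this,
      add_sum_sub_smul_neg_col]
  · have hM : 0 ≤ M := (abs_nonneg _).trans (hAM i j)
    have hdev_y := linfnorm_smul_le (abs_l1norm_mul_sign_le (y - y₀) (y i - y₀ i)) (hAM i) hM
    have hdev_x := linfnorm_smul_le (abs_l1norm_mul_sign_le (x - x₀) (x j - x₀ j))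
      (fun k => hAM k j) hM
    rw [← linfnorm_neg] at hdev_x
    simp only [hGx, hGy, add_sub_cancel_left, sub_sub_cancel_left]
    calc _ ≤ (l1norm (y - y₀) * M) ^ 2 + (l1norm (x - x₀) * M) ^ 2 := by
          gcongr <;> exact linfnorm_nonneg _
      _ = M ^ 2 * (l1norm (x - x₀) ^ 2 + l1norm (y - y₀) ^ 2) := by ring

/-- the "sampling from the difference" estimator for ℓ₁-ℓ₁ games
is `(w₀, ‖A‖_max)`-centered: it is unbiased for `(Aᵀy, −Ax)`, and with
probability 1 (i.e. for every sampled pair `(i,j)`) the squared dual-norm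
deviation from `(Aᵀy₀, −Ax₀)` is at most `‖A‖_max² (‖x−x₀‖₁² + ‖y−y₀‖₁²)`. -/
theorem l1_l1_estimator_centered {m n : ℕ}
    (A : Matrix (Fin m) (Fin n) ℝ)
    (x x₀ : Fin n → ℝ) (y y₀ : Fin m → ℝ)
    (hx : (∀ j, 0 ≤ x j) ∧ ∑ j, x j = 1)
    (hx₀ : (∀ j, 0 ≤ x₀ j) ∧ ∑ j, x₀ j = 1)
    (hy : (∀ i, 0 ≤ y i) ∧ ∑ i, y i = 1)
    (hy₀ : (∀ i, 0 ≤ y₀ i) ∧ ∑ i, y₀ i = 1)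
    (hxne : x ≠ x₀) (hyne : y ≠ y₀)
    (p : Fin m → ℝ) (hp : ∀ i, p i = |y i - y₀ i| / l1norm (y - y₀))
    (q : Fin n → ℝ) (hq : ∀ j, q j = |x j - x₀ j| / l1norm (x - x₀))
    (Gx : Fin m → Fin n → ℝ) (Gy : Fin n → Fin m → ℝ)
    (hGx : ∀ i, Gx i =
      (fun k => ∑ i', A i' k * y₀ i') +
        (l1norm (y - y₀) * Real.sign (y i - y₀ i)) • A i)
    (hGy : ∀ j, Gy j =
      (fun i => -∑ j', A i j' * x₀ j') -
        (l1norm (x - x₀) * Real.sign (x j - x₀ j)) • (fun i => A i j)) :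
    (∑ i, p i • Gx i = fun k => ∑ i', A i' k * y i') ∧
    (∑ j, q j • Gy j = fun i => -∑ j', A i j' * x j') ∧
    (∀ i j,
      linfnorm (Gx i - fun k => ∑ i', A i' k * y₀ i') ^ 2 +
        linfnorm (Gy j - fun i' => -∑ j', A i' j' * x₀ j') ^ 2 ≤
      (⨆ ij : Fin m × Fin n, |A ij.1 ij.2|) ^ 2 *
        (l1norm (x - x₀) ^ 2 + l1norm (y - y₀) ^ 2)) :=
  l1_l1_estimator_centered_general A x x₀ y y₀ hxne hyne p hp q hq Gx Gy hGx hGy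
end

section
/- In the ℓ₂-ℓ₁ setup, the estimator with sampling probabilities p_i = |y_i − (y₀)_i|/‖y − y₀‖₁ and q_j = (x_j − (x₀)_j)²/‖x − x₀‖₂² is (w₀, L)-centered with L = (∑_{j∈[n]} ‖A_{:j}‖_∞²)^{1/2}. That is, the estimator g̃(w) = (Aᵀy₀ + A_{i:}·‖y−y₀‖₁·sign(y_i − (y₀)_i), −Ax₀ − A_{:j}·‖x−x₀‖₂²/(x_j − (x₀)_j)) satisfies E[g̃(w)] = (Aᵀy, −Ax) and E‖g̃(w) − (Aᵀy₀, −Ax₀)‖*² ≤ L²(‖x − x₀‖₂² + ‖y − y₀‖₁²). -/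
noncomputable def l2sq {d : ℕ} (v : Fin d → ℝ) : ℝ := ∑ i, v i ^ 2

/-!
Both blocks are importance-sampling estimators. Sampling `i` with probability `|δᵢ| / ‖δ‖₁` and
rescaling the `i`-th term by `‖δ‖₁ sign δᵢ` (resp. sampling `j` with probability `δⱼ² / ‖δ‖₂²` and
rescaling by `‖δ‖₂² / δⱼ`) turns every weighted term back into `δᵢ aᵢ`, which gives unbiasedness.
In the second moment the probability cancels against the square of the rescaling, leaving
`|δᵢ| ‖δ‖₁ ‖A_{i:}‖₂²` and `‖δ‖₂² ‖A_{:j}‖_∞²`; finally `‖A_{i:}‖₂² ≤ ∑ⱼ ‖A_{:j}‖_∞²`.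
-/

open Finset

section Norms

variable {d : ℕ}

lemma linfnorm_eq_norm (v : Fin d → ℝ) : linfnorm v = ‖v‖ :=
  le_antisymm (Real.iSup_le (fun i => norm_le_pi_norm v i) (norm_nonneg v))
    ((pi_norm_le_iff_of_nonneg (Real.iSup_nonneg fun _ => abs_nonneg _)).2 fun i =>
      le_ciSup (f := fun i => |v i|) (Set.finite_range _).bddAbove i)

lemma l2sq_nonneg (v : Fin d → ℝ) : 0 ≤ l2sq v :=
  sum_nonneg fun _ _ => sq_nonneg _

lemma l2sq_smul (c : ℝ) (v : Fin d → ℝ) : l2sq (c • v) = c ^ 2 * l2sq v := by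
  simp only [l2sq, Pi.smul_apply, smul_eq_mul, mul_pow, mul_sum]

lemma l1norm_ne_zero {v : Fin d → ℝ} (hv : v ≠ 0) : l1norm v ≠ 0 := by
  obtain ⟨i, hi⟩ := Function.ne_iff.mp hv
  exact (sum_pos' (fun _ _ => abs_nonneg _) ⟨i, mem_univ i, abs_pos.2 hi⟩).ne'

lemma l2sq_ne_zero {v : Fin d → ℝ} (hv : v ≠ 0) : l2sq v ≠ 0 := by
  obtain ⟨i, hi⟩ := Function.ne_iff.mp hv
  exact (sum_pos' (fun _ _ => sq_nonneg _) ⟨i, mem_univ i, sq_pos_of_ne_zero hi⟩).ne'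

lemma sum_sq_div_l2sq {v : Fin d → ℝ} (hv : v ≠ 0) : ∑ i, v i ^ 2 / l2sq v = 1 := by
  rw [← sum_div]; exact div_self (l2sq_ne_zero hv)

end Norms

lemma Matrix.l2sq_row_le_sum_norm_col_sq {m n : ℕ} (A : Matrix (Fin m) (Fin n) ℝ) (i : Fin m) :
    l2sq (A i) ≤ ∑ j, ‖fun i => A i j‖ ^ 2 :=
  sum_le_sum fun j _ => by
    rw [← sq_abs]; exact pow_le_pow_left₀ (abs_nonneg _) (norm_le_pi_norm (fun i => A i j) i) 2

lemma abs_div_mul_mul_sign (a : ℝ) {b : ℝ} (hb : b ≠ 0) : |a| / b * (b * Real.sign a) = a := by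
  rcases lt_trichotomy a 0 with ha | rfl | ha
  · rw [Real.sign_of_neg ha, abs_of_neg ha]; field_simp
  · simp
  · rw [Real.sign_of_pos ha, abs_of_pos ha]; field_simp

lemma sq_div_mul_div (a : ℝ) {b : ℝ} (hb : b ≠ 0) : a ^ 2 / b * (b / a) = a := by
  rcases eq_or_ne a 0 with rfl | ha
  · simp
  · field_simp

lemma abs_div_mul_mul_sign_sq_le (a : ℝ) {b : ℝ} (hb : 0 ≤ b) :
    |a| / b * (b * Real.sign a) ^ 2 ≤ |a| * b := by
  rcases hb.eq_or_lt with rfl | hb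
  · simp
  have hs : Real.sign a ^ 2 ≤ 1 := by
    rcases Real.sign_apply_eq a with h | h | h <;> norm_num [h]
  calc |a| / b * (b * Real.sign a) ^ 2 = |a| * b * Real.sign a ^ 2 := by field_simp
    _ ≤ |a| * b := mul_le_of_le_one_right (by positivity) hs

lemma sq_div_mul_div_sq_le (a : ℝ) {b : ℝ} (hb : 0 ≤ b) : a ^ 2 / b * (b / a) ^ 2 ≤ b := by
  rcases eq_or_ne a 0 with rfl | ha
  · simpa using hb
  rcases hb.eq_or_lt with rfl | hb
  · simp
  exact (show a ^ 2 / b * (b / a) ^ 2 = b by field_simp).le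

section Sampling

variable {ι E : Type*} [Fintype ι] [AddCommGroup E] [Module ℝ E]

lemma sum_smul_const_add_smul {w : ι → ℝ} (hw : ∑ i, w i = 1) (c : E) (s : ι → ℝ) (a : ι → E) :
    ∑ i, w i • (c + s i • a i) = c + ∑ i, (w i * s i) • a i := by
  simp only [smul_add, smul_smul, sum_add_distrib, ← sum_smul, hw, one_smul]

variable {d : ℕ}

lemma sum_l1_importance_sampling {δ : Fin d → ℝ} (hδ : δ ≠ 0) (c : E) (a : Fin d → E) :
    ∑ i, (|δ i| / l1norm δ) • (c + (l1norm δ * Real.sign (δ i)) • a i) = c + ∑ i, δ i • a i := by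
  simp only [sum_smul_const_add_smul (sum_abs_div_l1norm hδ),
    abs_div_mul_mul_sign _ (l1norm_ne_zero hδ)]

lemma sum_l2_importance_sampling {δ : Fin d → ℝ} (hδ : δ ≠ 0) (c : E) (a : Fin d → E) :
    ∑ i, (δ i ^ 2 / l2sq δ) • (c - (l2sq δ / δ i) • a i) = c - ∑ i, δ i • a i := by
  simp only [sub_eq_add_neg, ← neg_smul]
  rw [sum_smul_const_add_smul (sum_sq_div_l2sq hδ)]
  simp only [mul_neg, sq_div_mul_div _ (l2sq_ne_zero hδ), neg_smul, sum_neg_distrib]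

end Sampling

lemma sum_l1_importance_second_moment_le {d n : ℕ} (δ : Fin d → ℝ) (a : Fin d → Fin n → ℝ)
    {T : ℝ} (ha : ∀ i, l2sq (a i) ≤ T) :
    ∑ i, |δ i| / l1norm δ * l2sq ((l1norm δ * Real.sign (δ i)) • a i) ≤ l1norm δ ^ 2 * T := by
  have hN : 0 ≤ l1norm δ := sum_nonneg fun _ _ => abs_nonneg _
  calc ∑ i, |δ i| / l1norm δ * l2sq ((l1norm δ * Real.sign (δ i)) • a i)
      = ∑ i, |δ i| / l1norm δ * (l1norm δ * Real.sign (δ i)) ^ 2 * l2sq (a i) := by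
        simp only [l2sq_smul, mul_assoc]
    _ ≤ ∑ i, |δ i| * l1norm δ * T := sum_le_sum fun i _ =>
        mul_le_mul (abs_div_mul_mul_sign_sq_le _ hN) (ha i) (l2sq_nonneg _) (by positivity)
    _ = l1norm δ ^ 2 * T := by rw [← sum_mul, ← sum_mul]; unfold l1norm; ring

lemma sum_l2_importance_second_moment_le {E : Type*} [SeminormedAddCommGroup E]
    [NormedSpace ℝ E] {d : ℕ} (δ : Fin d → ℝ) (a : Fin d → E) :
    ∑ i, δ i ^ 2 / l2sq δ * ‖(l2sq δ / δ i) • a i‖ ^ 2 ≤ l2sq δ * ∑ i, ‖a i‖ ^ 2 := by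
  refine (sum_le_sum fun i _ => ?_).trans_eq (mul_sum ..).symm
  rw [norm_smul, mul_pow, Real.norm_eq_abs, sq_abs, ← mul_assoc]
  exact mul_le_mul_of_nonneg_right (sq_div_mul_div_sq_le _ (l2sq_nonneg δ)) (sq_nonneg _)

theorem l2_l1_basic_estimator_centered_general {m n : ℕ}
    (A : Matrix (Fin m) (Fin n) ℝ)
    (x x₀ : Fin n → ℝ) (y y₀ : Fin m → ℝ)
    (hxne : x ≠ x₀) (hyne : y ≠ y₀)
    (p : Fin m → ℝ) (hp : ∀ i, p i = |y i - y₀ i| / l1norm (y - y₀))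
    (q : Fin n → ℝ) (hq : ∀ j, q j = (x j - x₀ j) ^ 2 / l2sq (x - x₀))
    (Gx : Fin m → Fin n → ℝ) (Gy : Fin n → Fin m → ℝ)
    (hGx : ∀ i, Gx i =
      (fun k => ∑ i', A i' k * y₀ i') +
        (l1norm (y - y₀) * Real.sign (y i - y₀ i)) • A i)
    (hGy : ∀ j, Gy j =
      (fun i => -∑ j', A i j' * x₀ j') -
        (l2sq (x - x₀) / (x j - x₀ j)) • (fun i => A i j)) :
    (∑ i, p i • Gx i = fun k => ∑ i', A i' k * y i') ∧
    (∑ j, q j • Gy j = fun i => -∑ j', A i j' * x j') ∧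
    (∑ i, p i * l2sq (Gx i - fun k => ∑ i', A i' k * y₀ i') +
      ∑ j, q j * linfnorm (Gy j - fun i' => -∑ j', A i' j' * x₀ j') ^ 2 ≤
      (∑ j, linfnorm (fun i => A i j) ^ 2) *
        (l2sq (x - x₀) + l1norm (y - y₀) ^ 2)) := by
  obtain rfl : p = _ := funext hp
  obtain rfl : q = _ := funext hq
  obtain rfl : Gx = _ := funext hGx
  obtain rfl : Gy = _ := funext hGy
  simp only [linfnorm_eq_norm]
  refine ⟨?_, ?_, ?_⟩
  · refine (sum_l1_importance_sampling (sub_ne_zero.2 hyne) _ A).trans ?_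
    ext k
    simp only [Pi.add_apply, Finset.sum_apply, Pi.smul_apply, smul_eq_mul, ← sum_add_distrib]
    exact sum_congr rfl fun i _ => by simp only [Pi.sub_apply]; ring
  · refine (sum_l2_importance_sampling (sub_ne_zero.2 hxne) _ fun j i => A i j).trans ?_
    ext i
    simp only [Pi.sub_apply, Finset.sum_apply, Pi.smul_apply, smul_eq_mul, ← neg_add',
      ← sum_add_distrib]
    exact congrArg _ (sum_congr rfl fun j _ => by ring)
  · simp only [add_sub_cancel_left, sub_sub_cancel_left, norm_neg]
    have hx := sum_l2_importance_second_moment_le (x - x₀) fun j i => A i j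
    have hy := sum_l1_importance_second_moment_le (y - y₀) A A.l2sq_row_le_sum_norm_col_sq
    simp only [Pi.sub_apply] at hx hy
    linarith

/-- in the ℓ₂-ℓ₁ setup, the estimator with sampling
probabilities `p_i = |y_i − y₀ᵢ|/‖y−y₀‖₁` and `q_j = (x_j − x₀ⱼ)²/‖x−x₀‖₂²`
is `(w₀, L)`-centered with `L² = ∑_j ‖A_{:j}‖_∞²`: it is unbiased for
`(Aᵀy, −Ax)` and its expected squared dual-norm deviation from
`(Aᵀy₀, −Ax₀)` is at most `L² (‖x−x₀‖₂² + ‖y−y₀‖₁²)`. -/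
theorem l2_l1_basic_estimator_centered {m n : ℕ}
    (A : Matrix (Fin m) (Fin n) ℝ)
    (x x₀ : Fin n → ℝ) (y y₀ : Fin m → ℝ)
    (hxball : l2sq x ≤ 1) (hx₀ball : l2sq x₀ ≤ 1)
    (hy : (∀ i, 0 ≤ y i) ∧ ∑ i, y i = 1)
    (hy₀ : (∀ i, 0 ≤ y₀ i) ∧ ∑ i, y₀ i = 1)
    (hxne : x ≠ x₀) (hyne : y ≠ y₀)
    (p : Fin m → ℝ) (hp : ∀ i, p i = |y i - y₀ i| / l1norm (y - y₀))
    (q : Fin n → ℝ) (hq : ∀ j, q j = (x j - x₀ j) ^ 2 / l2sq (x - x₀))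
    (Gx : Fin m → Fin n → ℝ) (Gy : Fin n → Fin m → ℝ)
    (hGx : ∀ i, Gx i =
      (fun k => ∑ i', A i' k * y₀ i') +
        (l1norm (y - y₀) * Real.sign (y i - y₀ i)) • A i)
    (hGy : ∀ j, Gy j =
      (fun i => -∑ j', A i j' * x₀ j') -
        (l2sq (x - x₀) / (x j - x₀ j)) • (fun i => A i j)) :
    (∑ i, p i • Gx i = fun k => ∑ i', A i' k * y i') ∧
    (∑ j, q j • Gy j = fun i => -∑ j', A i j' * x j') ∧
    (∑ i, p i * l2sq (Gx i - fun k => ∑ i', A i' k * y₀ i') +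
      ∑ j, q j * linfnorm (Gy j - fun i' => -∑ j', A i' j' * x₀ j') ^ 2 ≤
      (∑ j, linfnorm (fun i => A i j) ^ 2) *
        (l2sq (x - x₀) + l1norm (y - y₀) ^ 2)) :=
  l2_l1_basic_estimator_centered_general A x x₀ y y₀ hxne hyne p hp q hq Gx Gy hGx hGy
end

section
/- Bias bound for the clipped ℓ₂-ℓ₁ estimator: with sampling probability q_j = (x_j − (x₀)_j)²/‖x − x₀‖₂², and clipping operator T_τ(v) = min(τ, max(−τ, v)) applied entrywise, the clipped Y-block estimator satisfies, for every i ∈ [m], |E_j[A_{ij}(x_j − (x₀)_j)/q_j − T_τ(A_{ij}(x_j − (x₀)_j)/q_j)]| ≤ (1/τ)‖A_{i:}‖₂² ‖x − x₀‖₂². -/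
/-- Entrywise clipping to `[−τ, τ]`. -/
noncomputable def clip (τ a : ℝ) : ℝ := min τ (max (-τ) a)

lemma abs_sub_clip_le {τ a : ℝ} (hτ : 0 < τ) : |a - clip τ a| ≤ a ^ 2 / τ := by
  unfold clip
  rcases le_total a (-τ) with h | h
  · rw [max_eq_left h, min_eq_right (by linarith)]
    rw [abs_of_nonpos (by linarith)]
    rw [le_div_iff₀ hτ]
    nlinarith
  · rw [max_eq_right h]
    rcases le_total a τ with h2 | h2
    · rw [min_eq_right h2]
      simp
      positivity
    · rw [min_eq_left h2]
      rw [abs_of_nonneg (by linarith), le_div_iff₀ hτ]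
      nlinarith

/-- bias bound for the clipped ℓ₂-ℓ₁ estimator: with
`q_j = (x_j − x₀ⱼ)²/‖x−x₀‖₂²`, for every row `i`,
`|E_j[A_{ij}(x_j − x₀ⱼ)/q_j − T_τ(A_{ij}(x_j − x₀ⱼ)/q_j)]|
  ≤ (1/τ) ‖A_{i:}‖₂² ‖x − x₀‖₂²`. -/
theorem clipped_estimator_bias_bound {m n : ℕ}
    (A : Matrix (Fin m) (Fin n) ℝ)
    (x x₀ : Fin n → ℝ) (hne : x ≠ x₀)
    (τ : ℝ) (hτ : 0 < τ)
    (q : Fin n → ℝ)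
    (hq : ∀ j, q j = (x j - x₀ j) ^ 2 / ∑ j', (x j' - x₀ j') ^ 2) :
    ∀ i,
      |∑ j, q j * (A i j * (x j - x₀ j) / q j -
          clip τ (A i j * (x j - x₀ j) / q j))| ≤
        (1 / τ) * (∑ j, A i j ^ 2) * ∑ j, (x j - x₀ j) ^ 2 := by
  intro i
  set S := ∑ j', (x j' - x₀ j') ^ 2 with hS
  have hSpos : 0 < S := by
    have : ∃ j, x j ≠ x₀ j := by
      by_contra h
      push_neg at h
      exact hne (funext h)
    obtain ⟨j, hj⟩ := this
    apply Finset.sum_pos' (fun k _ => sq_nonneg _) ⟨j, Finset.mem_univ j, by have := sub_ne_zero.mpr hj; positivity⟩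
  calc |∑ j, q j * (A i j * (x j - x₀ j) / q j -
          clip τ (A i j * (x j - x₀ j) / q j))|
      ≤ ∑ j, |q j * (A i j * (x j - x₀ j) / q j -
          clip τ (A i j * (x j - x₀ j) / q j))| := Finset.abs_sum_le_sum_abs _ _
    _ ≤ ∑ j, (1 / τ) * A i j ^ 2 * S := by
        apply Finset.sum_le_sum
        intro j _
        by_cases hd : x j = x₀ j
        · have : q j = 0 := by rw [hq j, hd]; simp
          rw [this]
          simp
          positivity
        · have hd2 : (x j - x₀ j) ^ 2 > 0 := by
            have : x j - x₀ j ≠ 0 := sub_ne_zero.mpr hd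
            positivity
          have hqj : 0 < q j := by rw [hq j]; positivity
          rw [abs_mul, abs_of_pos hqj]
          have hb := abs_sub_clip_le (a := A i j * (x j - x₀ j) / q j) hτ
          have : q j * |A i j * (x j - x₀ j) / q j -
              clip τ (A i j * (x j - x₀ j) / q j)| ≤
              q j * ((A i j * (x j - x₀ j) / q j) ^ 2 / τ) :=
            mul_le_mul_of_nonneg_left hb hqj.le
          refine this.trans (le_of_eq ?_)
          rw [hq j]
          field_simp
    _ = (1 / τ) * (∑ j, A i j ^ 2) * S := by
        simp [Finset.mul_sum, Finset.sum_mul, mul_assoc]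
end

section
/- Local norms bound for negative entropy: let y, y' ∈ Δᵐ and δ ∈ ℝᵐ with δ_i ≤ 1.79 for all i. Then ⟨δ, y' − y⟩ − KL(y' ‖ y) ≤ ∑_{i∈[m]} y_i δ_i², where KL(y' ‖ y) = ∑_i y'_i log(y'_i/y_i) is the Bregman divergence of negative entropy. -/
/-!
Termwise, `t a - a log (a / b) ≤ b eᵗ - a` for `a ≥ 0 < b`: this is the Fenchel–Young inequality
for the conjugate pair `u log u - u` and `eᵗ`, i.e. `log u ≤ u - 1` at `u = b eᵗ / a`.
With `a = y'ᵢ`, `b = yᵢ`, `t = δᵢ` and `e^δ ≤ 1 + δ + δ²`, summing gives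
`⟨δ, y' - y⟩ - KL(y' ‖ y) ≤ ∑ yᵢ δᵢ² + ∑ yᵢ - ∑ y'ᵢ`, and the last two sums cancel on the simplex.
-/

open Real Set Finset

namespace Real

theorem hasDerivAt_one_add_add_sq_mul_exp_neg (x : ℝ) :
    HasDerivAt (fun x => (1 + x + x ^ 2) * exp (-x)) (x * (1 - x) * exp (-x)) x := by
  have h : HasDerivAt (fun x => (1 + x + x ^ 2) * exp (-x))
      ((1 + (2 : ℕ) * x ^ (2 - 1)) * exp (-x) + (1 + x + x ^ 2) * (exp (-x) * -1)) x :=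
    (((hasDerivAt_id x).const_add 1).add (hasDerivAt_pow 2 x)).mul (hasDerivAt_neg x).exp
  exact h.congr_deriv (by push_cast; ring)

theorem exp_one_point_seven_nine_le : exp 1.79 ≤ 1 + 1.79 + 1.79 ^ 2 := by
  have hhalf : exp 0.895 ≤ 2.4474 := by
    refine (exp_bound' (by norm_num) (by norm_num) (n := 7) (by norm_num)).trans ?_
    simp only [Finset.sum_range_succ, Nat.factorial]
    norm_num
  calc exp 1.79 = exp 0.895 * exp 0.895 := by rw [← exp_add]; norm_num
    _ ≤ 2.4474 * 2.4474 := mul_le_mul hhalf hhalf (exp_pos _).le (by norm_num)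
    _ ≤ 1 + 1.79 + 1.79 ^ 2 := by norm_num

/-- `f x = (1 + x + x²) e⁻ˣ` has `f' x = x (1 - x) e⁻ˣ`, so `f ≥ f 0 = 1` on `(-∞, 1]`, and `f`
decreases on `[1, ∞)`, where it drops below `1` only slightly after `1.79`. -/
theorem exp_le_one_add_add_sq {x : ℝ} (hx : x ≤ 1.79) : exp x ≤ 1 + x + x ^ 2 := by
  set f : ℝ → ℝ := fun x => (1 + x + x ^ 2) * exp (-x)
  have hf' : ∀ {D : Set ℝ}, ∀ x ∈ interior D,
      HasDerivWithinAt f (x * (1 - x) * exp (-x)) (interior D) x :=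
    fun x _ => (hasDerivAt_one_add_add_sq_mul_exp_neg x).hasDerivWithinAt
  have hfc : ∀ {D : Set ℝ}, ContinuousOn f D := by fun_prop
  have hf0 : f 0 = 1 := by simp [f]
  suffices 1 ≤ f x by
    have := mul_le_mul_of_nonneg_left this (exp_pos x).le
    rwa [mul_one, mul_left_comm, ← exp_add, add_neg_cancel, exp_zero, mul_one] at this
  rcases le_total x 0 with hx0 | hx0
  · refine hf0 ▸ antitoneOn_of_hasDerivWithinAt_nonpos (convex_Iic 0) hfc hf' ?_
      hx0 self_mem_Iic hx0
    intro t ht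
    rw [interior_Iic] at ht
    exact mul_nonpos_of_nonpos_of_nonneg
      (mul_nonpos_of_nonpos_of_nonneg ht.out.le (by linarith [ht.out])) (exp_pos _).le
  rcases le_total x 1 with hx1 | hx1
  · refine hf0 ▸ monotoneOn_of_hasDerivWithinAt_nonneg (convex_Icc 0 1) hfc hf' ?_
      (left_mem_Icc.2 zero_le_one) ⟨hx0, hx1⟩ hx0
    intro t ht
    rw [interior_Icc] at ht
    exact mul_nonneg (mul_nonneg ht.1.le (by linarith [ht.2])) (exp_pos _).le
  · have hf179 : 1 ≤ f 1.79 := by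
      simp only [f]
      rw [exp_neg, ← div_eq_mul_inv, one_le_div (exp_pos _)]
      exact exp_one_point_seven_nine_le
    refine hf179.trans <| antitoneOn_of_hasDerivWithinAt_nonpos (convex_Icc 1 1.79) hfc hf' ?_
      ⟨hx1, hx⟩ (right_mem_Icc.2 (by norm_num)) hx
    intro t ht
    rw [interior_Icc] at ht
    exact mul_nonpos_of_nonpos_of_nonneg
      (mul_nonpos_of_nonneg_of_nonpos (by linarith [ht.1]) (by linarith [ht.1])) (exp_pos _).le

theorem mul_sub_mul_log_div_le {a b : ℝ} (ha : 0 ≤ a) (hb : 0 < b) (t : ℝ) :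
    t * a - a * log (a / b) ≤ b * exp t - a := by
  rcases ha.eq_or_lt with rfl | ha
  · simp only [mul_zero, zero_div, log_zero, sub_zero]
    positivity
  have hc : 0 < b * exp t := by positivity
  have h := log_le_sub_one_of_pos (div_pos hc ha)
  rw [log_div hc.ne' ha.ne', log_mul hb.ne' (exp_pos t).ne', log_exp, div_sub_one ha.ne',
    le_div_iff₀ ha] at h
  rw [log_div ha.ne' hb.ne']
  linarith

end Real

/-- local-norms bound for negative entropy: for `y, y'` in the
simplex (with `y` strictly positive, where the KL divergence is finite) and
`δ` with `δᵢ ≤ 1.79` for all `i`,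
`⟨δ, y' − y⟩ − KL(y'‖y) ≤ ∑ᵢ yᵢ δᵢ²`. -/
theorem entropy_local_norms {m : ℕ}
    (y y' : Fin m → ℝ)
    (hy : (∀ i, 0 ≤ y i) ∧ ∑ i, y i = 1)
    (hy' : (∀ i, 0 ≤ y' i) ∧ ∑ i, y' i = 1)
    (hypos : ∀ i, 0 < y i)
    (δ : Fin m → ℝ) (hδ : ∀ i, δ i ≤ 1.79) :
    ∑ i, δ i * (y' i - y i) - ∑ i, y' i * Real.log (y' i / y i) ≤
      ∑ i, y i * δ i ^ 2 := by
  have termwise : ∀ i, δ i * (y' i - y i) - y' i * log (y' i / y i) ≤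
      y i * δ i ^ 2 + (y i - y' i) := fun i => by
    have hconj := mul_sub_mul_log_div_le (hy'.1 i) (hypos i) (δ i)
    have hexp := mul_le_mul_of_nonneg_left (exp_le_one_add_add_sq (hδ i)) (hypos i).le
    linarith
  calc ∑ i, δ i * (y' i - y i) - ∑ i, y' i * log (y' i / y i)
      = ∑ i, (δ i * (y' i - y i) - y' i * log (y' i / y i)) := (sum_sub_distrib _ _).symm
    _ ≤ ∑ i, (y i * δ i ^ 2 + (y i - y' i)) := sum_le_sum fun i _ => termwise i
    _ = ∑ i, y i * δ i ^ 2 := by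
      rw [sum_add_distrib, sum_sub_distrib, hy.2, hy'.2, sub_self, add_zero]
end

section
/- Smoothness of log-sum-exp in local norms: for γ, δ ∈ ℝᵐ with δ_i ≤ 1.79 for all i, the function r*(γ) = log(∑_i e^{γ_i}) satisfies r*(γ + δ) − r*(γ) − ⟨∇r*(γ), δ⟩ ≤ ∑_i [∇r*(γ)]_i δ_i², where [∇r*(γ)]_i = e^{γ_i}/∑_j e^{γ_j}. -/
lemma exp_key {x : ℝ} (hx : x ≤ 1.79) : Real.exp x ≤ 1 + x + x ^ 2 := by
  rcases le_or_gt x (-1) with h | h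
  · have h1 : Real.exp x ≤ Real.exp (-1) := Real.exp_le_exp.mpr h
    have h2 : Real.exp (-1) < 1 := Real.exp_lt_one_iff.mpr (by norm_num)
    nlinarith
  · rcases le_or_gt x 1 with h2 | h2
    · have habs : |x| ≤ 1 := abs_le.mpr ⟨by linarith, h2⟩
      have hb := Real.exp_bound habs (by norm_num : (0:ℕ) < 2)
      have h3 := (abs_sub_le_iff.1 hb).1
      have h4 : |x| ^ 2 = x ^ 2 := sq_abs x
      simp [Finset.sum_range_succ, Nat.factorial] at h3
      nlinarith [sq_nonneg x]
    · set y := x / 2 with hy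
      have hy1 : |y| ≤ 1 := abs_le.mpr ⟨by simp [hy]; linarith, by simp [hy]; linarith⟩
      have hb := Real.exp_bound hy1 (by norm_num : (0:ℕ) < 5)
      have h3 := (abs_sub_le_iff.1 hb).1
      have hya : |y| = y := abs_of_pos (by simp [hy]; linarith)
      rw [hya] at h3
      simp [Finset.sum_range_succ, Nat.factorial] at h3
      have hQ : Real.exp y ≤ 1 + y + y^2/2 + y^3/6 + y^4/24 + y^5/100 := by
        nlinarith
      have hx2 : Real.exp x = (Real.exp y) ^ 2 := by
        rw [← Real.exp_nat_mul]; norm_num [hy]; ring_nf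
      have hpos : (0:ℝ) ≤ Real.exp y := (Real.exp_pos y).le
      have hyb : y ≤ 0.895 := by simp [hy]; linarith
      have hyb2 : (0:ℝ) ≤ y := by simp [hy]; linarith
      have hsq : (Real.exp y)^2 ≤ (1 + y + y^2/2 + y^3/6 + y^4/24 + y^5/100)^2 :=
        pow_le_pow_left₀ hpos hQ 2
      have p1 : y^1 ≤ 0.895^1 := pow_le_pow_left₀ hyb2 hyb 1
      have p2 : y^2 ≤ 0.895^2 := pow_le_pow_left₀ hyb2 hyb 2
      have p3 : y^3 ≤ 0.895^3 := pow_le_pow_left₀ hyb2 hyb 3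
      have p4 : y^4 ≤ 0.895^4 := pow_le_pow_left₀ hyb2 hyb 4
      have p5 : y^5 ≤ 0.895^5 := pow_le_pow_left₀ hyb2 hyb 5
      have p6 : y^6 ≤ 0.895^6 := pow_le_pow_left₀ hyb2 hyb 6
      have p7 : y^7 ≤ 0.895^7 := pow_le_pow_left₀ hyb2 hyb 7
      have p8 : y^8 ≤ 0.895^8 := pow_le_pow_left₀ hyb2 hyb 8
      have hG : 0 ≤ 2 - 4/3*y - 2/3*y^2 - 27/100*y^3 - 161/1800*y^4 - 43/1800*y^5
          - 73/14400*y^6 - 1/1200*y^7 - 1/10000*y^8 := by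
        norm_num at p1 p2 p3 p4 p5 p6 p7 p8 ⊢; linarith
      have hfin : (1 + y + y^2/2 + y^3/6 + y^4/24 + y^5/100)^2 ≤ 1 + 2*y + 4*y^2 := by
        nlinarith [mul_nonneg (sq_nonneg y) hG]
      have hxy : x = 2 * y := by rw [hy]; ring
      rw [hx2, hxy]; nlinarith

/-- local-norms smoothness of log-sum-exp: for `γ, δ ∈ ℝᵐ` with
`δᵢ ≤ 1.79` for all `i`, the function `r*(γ) = log ∑ᵢ exp γᵢ` satisfies
`r*(γ+δ) − r*(γ) − ⟨∇r*(γ), δ⟩ ≤ ∑ᵢ [∇r*(γ)]ᵢ δᵢ²` where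
`[∇r*(γ)]ᵢ = exp γᵢ / ∑ⱼ exp γⱼ` is the softmax. -/
theorem logsumexp_local_smoothness {m : ℕ}
    (γ δ : Fin m → ℝ) (hδ : ∀ i, δ i ≤ 1.79) :
    Real.log (∑ i, Real.exp (γ i + δ i)) - Real.log (∑ i, Real.exp (γ i)) -
        ∑ i, (Real.exp (γ i) / ∑ i', Real.exp (γ i')) * δ i ≤
      ∑ i, (Real.exp (γ i) / ∑ i', Real.exp (γ i')) * δ i ^ 2 := by
  rcases Nat.eq_zero_or_pos m with hm | hm
  · subst hm; simp
  have hne : (Finset.univ : Finset (Fin m)).Nonempty := by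
    have : Nonempty (Fin m) := Fin.pos_iff_nonempty.mp hm
    exact Finset.univ_nonempty
  set S : ℝ := ∑ i', Real.exp (γ i') with hS
  have hSpos : 0 < S := Finset.sum_pos (fun i _ => Real.exp_pos _) hne
  set T1 : ℝ := ∑ i, Real.exp (γ i) * δ i with hT1
  set T2 : ℝ := ∑ i, Real.exp (γ i) * δ i ^ 2 with hT2
  have hstep : ∑ i, Real.exp (γ i + δ i) ≤ S + T1 + T2 := by
    have : ∀ i : Fin m, Real.exp (γ i + δ i) ≤
        Real.exp (γ i) + Real.exp (γ i) * δ i + Real.exp (γ i) * δ i ^ 2 := by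
      intro i
      rw [Real.exp_add]
      have := exp_key (hδ i)
      nlinarith [Real.exp_pos (γ i)]
    calc ∑ i, Real.exp (γ i + δ i)
        ≤ ∑ i, (Real.exp (γ i) + Real.exp (γ i) * δ i + Real.exp (γ i) * δ i ^ 2) :=
          Finset.sum_le_sum (fun i _ => this i)
      _ = S + T1 + T2 := by rw [hS, hT1, hT2, ← Finset.sum_add_distrib, ← Finset.sum_add_distrib]
  have hLpos : 0 < ∑ i, Real.exp (γ i + δ i) := Finset.sum_pos (fun i _ => Real.exp_pos _) hne
  have hRpos : 0 < S + T1 + T2 := lt_of_lt_of_le hLpos hstep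
  have hlog1 : Real.log (∑ i, Real.exp (γ i + δ i)) ≤ Real.log (S + T1 + T2) :=
    Real.log_le_log hLpos hstep
  have hlog2 : Real.log (S + T1 + T2) - Real.log S ≤ (T1 + T2) / S := by
    have hdiv : 0 < (S + T1 + T2) / S := div_pos hRpos hSpos
    have := Real.log_le_sub_one_of_pos hdiv
    rw [Real.log_div (ne_of_gt hRpos) (ne_of_gt hSpos)] at this
    have heq : (S + T1 + T2) / S - 1 = (T1 + T2) / S := by
      field_simp; ring
    linarith [heq ▸ this]
  have hT1eq : ∑ i, (Real.exp (γ i) / S) * δ i = T1 / S := by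
    rw [hT1, Finset.sum_div]; exact Finset.sum_congr rfl (fun i _ => by ring)
  have hT2eq : ∑ i, (Real.exp (γ i) / S) * δ i ^ 2 = T2 / S := by
    rw [hT2, Finset.sum_div]; exact Finset.sum_congr rfl (fun i _ => by ring)
  rw [hT1eq, hT2eq]
  have : (T1 + T2) / S = T1 / S + T2 / S := add_div _ _ _
  linarith
end

section
/- Linear convergence recursion for strongly monotone prox-method: suppose g is μ-strongly monotone relative to distance generating function r (⟨g(z') − g(z), z' − z⟩ ≥ μ V_{z'}(z) for all z, z'), z* is its saddle point satisfying ⟨g(z*), z* − u⟩ ≤ 0 for all u, and one step computes z_k = argmin_{z∈Z} {⟨g(z_{k−1/2}), z⟩ + α V_{z_{k−1}}(z) + μ V_{z_{k−1/2}}(z)}. Then μ V_{z_{k−1/2}}(z*) ≤ α V_{z_{k−1}}(z*) − (μ+α) V_{z_k}(z*) + μ V_{z_{k−1/2}}(z*) + [⟨g(z_{k−1/2}), z_{k−1/2} − z_k⟩ − α V_{z_{k−1}}(z_k)], and in particular (μ+α) V_{z_k}(z*) ≤ α V_{z_{k−1}}(z*) + ⟨g(z_{k−1/2}), z_{k−1/2}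 − z_k⟩ − α V_{z_{k−1}}(z_k). -/
open scoped RealInnerProductSpace

/-- linear convergence recursion for the strongly monotone
prox-method.  If `g` is `μ`-strongly monotone relative to `r`, `z⋆` is its
saddle point, and `z_k` minimizes
`⟨g(z_half), ·⟩ + α V_{z_{k−1}}(·) + μ V_{z_half}(·)` over `Z`
(encoded by its first-order optimality condition), then the stated
one-step inequalities hold. -/
theorem strongly_monotone_prox_recursion
    {E : Type*} [NormedAddCommGroup E] [InnerProductSpace ℝ E]
    (Z : Set E) (hZconv : Convex ℝ Z) (hZcomp : IsCompact Z)
    (r : E → ℝ) (gr : E → E)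
    (V : E → E → ℝ) (hV : ∀ a b, V a b = r b - r a - ⟪gr a, b - a⟫)
    (hstrong : ∀ a ∈ Z, ∀ b ∈ Z, (1 / 2) * ‖b - a‖ ^ 2 ≤ V a b)
    (g : E → E) (μ α : ℝ) (hμ : 0 < μ) (hα : 0 < α)
    (hmono : ∀ z ∈ Z, ∀ z' ∈ Z, μ * V z' z ≤ ⟪g z' - g z, z' - z⟫)
    (zstar : E) (hzstar : zstar ∈ Z)
    (hsaddle : ∀ u ∈ Z, ⟪g zstar, zstar - u⟫ ≤ 0)
    (zprev zhalf zk : E)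
    (hzprev : zprev ∈ Z) (hzhalf : zhalf ∈ Z) (hzk : zk ∈ Z)
    (hopt : ∀ u ∈ Z,
      ⟪g zhalf + α • (gr zk - gr zprev) + μ • (gr zk - gr zhalf), zk - u⟫ ≤ 0) :
    (μ * V zhalf zstar ≤
        α * V zprev zstar - (μ + α) * V zk zstar + μ * V zhalf zstar +
          (⟪g zhalf, zhalf - zk⟫ - α * V zprev zk)) ∧
    ((μ + α) * V zk zstar ≤
        α * V zprev zstar + ⟪g zhalf, zhalf - zk⟫ - α * V zprev zk) := by
  have h1 := hopt zstar hzstar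
  have h2 := hmono zstar hzstar zhalf hzhalf
  have h3 := hsaddle zhalf hzhalf
  have h4 : (0:ℝ) ≤ V zhalf zk :=
    le_trans (by positivity) (hstrong zhalf hzhalf zk hzk)
  simp only [hV, inner_add_left, inner_sub_left, inner_sub_right,
    real_inner_smul_left, inner_smul_left, RCLike.ofReal_real_eq_id, id_eq, starRingEnd_apply, star_trivial] at *
  constructor <;> nlinarith [h1, h2, h3, h4]
end
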